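/- For every nonnegative integer n, the sum of all μ-deformed binomial coefficients of upper index 2n satisfies p_{2n,μ}(1,1) = Σ_{k=0}^{2n} C_μ(2n,k) = 2^{2n} · Π_{k=1}^{n} (k+μ)/(k+2μ). -/

import Mathlib

open Finset

/-- The μ-deformed factorial function γ_μ. -/
noncomputable def gammaMu (μ : ℝ) : ℕ → ℝ
  | 0 => 1
  | n + 1 => ((n + 1 : ℝ) + 2 * μ * (if Odd (n + 1) then 1 else 0)) * gammaMu μ n

/-- The μ-deformed binomial coefficient C_μ(n,k), zero outside 0 ≤ k ≤ n. -/
noncomputable def binomMu (μ : ℝ) (n : ℕ) (k : ℤ) : ℝ :=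
  if 0 ≤ k ∧ k ≤ (n : ℤ) then gammaMu μ n / (gammaMu μ (n - k.toNat) * gammaMu μ k.toNat) else 0

/-- The n-th μ-deformed binomial polynomial p_{n,μ}(x,y). -/
noncomputable def pMu (μ : ℝ) (n : ℕ) (x y : ℂ) : ℂ :=
  ∑ k ∈ Finset.range (n + 1), (binomMu μ n k : ℂ) * x ^ k * y ^ (n - k)

/-- The μ-deformed exponential function. -/
noncomputable def expMu (μ : ℝ) (z : ℂ) : ℂ :=
  ∑' n : ℕ, z ^ n / (gammaMu μ n : ℂ)

/-- The Bessel function of the first kind of order ν, for positive real argument. -/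
noncomputable def besselJ (ν x : ℝ) : ℝ :=
  ∑' m : ℕ, ((-1) ^ m / (Nat.factorial m * Real.Gamma (ν + m + 1))) * (x / 2) ^ ((2 * m : ℝ) + ν)

/-! ### Auxiliary rising/falling factorials -/

/-- rising factorial -/
noncomputable def ascR (x : ℝ) : ℕ → ℝ
  | 0 => 1
  | m + 1 => ascR x m * (x + m)

/-- falling factorial -/
noncomputable def fallR (x : ℝ) : ℕ → ℝ
  | 0 => 1
  | m + 1 => fallR x m * (x - m)

lemma ascR_pos {x : ℝ} (hx : 0 < x) (m : ℕ) : 0 < ascR x m := by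
  induction m with
  | zero => simp [ascR]
  | succ m ih => rw [ascR]; exact mul_pos ih (by positivity)

lemma fallR_succ_top (x : ℝ) (m : ℕ) : fallR x (m+1) = x * fallR (x-1) m := by
  induction m generalizing x with
  | zero => simp [fallR]
  | succ m ih =>
    rw [show m+1+1 = (m+1)+1 from rfl, fallR, ih, fallR]
    push_cast
    ring

lemma fallR_eq_ascR (x : ℝ) (m : ℕ) : fallR x m = ascR (x - m + 1) m := by
  induction m generalizing x with
  | zero => simp [fallR, ascR]
  | succ m ih =>
    rw [fallR_succ_top, ih, ascR]
    have : x - 1 - ↑m + 1 = x - ↑(m+1) + 1 := by push_cast; ring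
    rw [this]
    have : x - ↑(m+1) + 1 + ↑m = x := by push_cast; ring
    rw [this]
    ring

lemma ascR_mul_fallR (x : ℝ) (m : ℕ) : ∀ d : ℕ,
    ascR x m * fallR (x + m + d - 1) d = ascR x (m + d) := by
  intro d
  induction d with
  | zero => simp [fallR]
  | succ d ih =>
    have h1 : fallR (x + ↑m + ↑(d+1) - 1) (d+1) = (x + ↑m + ↑d) * fallR (x + ↑m + ↑d - 1) d := by
      have e : x + ↑m + ↑(d+1) - 1 = (x + ↑m + ↑d - 1) + 1 := by push_cast; ring
      rw [e, fallR_succ_top]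
      ring_nf
    rw [show m + (d+1) = (m+d)+1 from rfl, ascR, ← ih, h1]
    push_cast
    ring

lemma ascR_add (x : ℝ) (m : ℕ) : ∀ d : ℕ, ascR x (m + d) = ascR x m * ascR (x + m) d := by
  intro d
  induction d with
  | zero => simp [ascR]
  | succ d ih =>
    rw [show m + (d+1) = (m+d)+1 from rfl, ascR, ih, ascR]
    push_cast
    ring

lemma ascR_dup (a : ℝ) (m : ℕ) : ascR (2*a) (2*m) = 4^m * ascR a m * ascR (a + 1/2) m := by
  induction m with
  | zero => simp [ascR]
  | succ m ih =>
    rw [show 2*(m+1) = (2*m+1)+1 from rfl, ascR, show 2*m+1 = (2*m)+1 from rfl, ascR, ih,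
      ascR, ascR]
    push_cast
    ring

lemma ascR_eq_prod (x : ℝ) (n : ℕ) : ascR x n = ∏ k ∈ range n, (x + k) := by
  induction n with
  | zero => simp [ascR]
  | succ n ih => rw [ascR, prod_range_succ, ih]

lemma fall_vandermonde (u v : ℝ) (n : ℕ) :
    ∑ j ∈ range (n+1), (n.choose j : ℝ) * fallR u j * fallR v (n-j) = fallR (u+v) n := by
  induction n with
  | zero => simp [fallR]
  | succ n ih =>
    calc ∑ j ∈ range (n+1+1), ((n+1).choose j : ℝ) * fallR u j * fallR v (n+1-j)
        = (∑ j ∈ range (n+1), ((n+1).choose (j+1) : ℝ) * fallR u (j+1) * fallR v (n+1-(j+1)))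
          + ((n+1).choose 0 : ℝ) * fallR u 0 * fallR v (n+1-0) :=
          Finset.sum_range_succ' _ (n+1)
      _ = (∑ j ∈ range (n+1), ((n.choose j : ℝ) * fallR u (j+1) * fallR v (n-j)
            + (n.choose (j+1) : ℝ) * fallR u (j+1) * fallR v (n+1-(j+1))))
          + (n.choose 0 : ℝ) * fallR u 0 * fallR v (n+1-0) := by
          congr 1
          · refine Finset.sum_congr rfl fun j hj => ?_
            rw [Nat.choose_succ_succ]
            push_cast
            ring
          · simp
      _ = (∑ j ∈ range (n+1), (n.choose j : ℝ) * fallR u (j+1) * fallR v (n-j))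
          + ((∑ j ∈ range (n+1), (n.choose (j+1) : ℝ) * fallR u (j+1) * fallR v (n+1-(j+1)))
            + (n.choose 0 : ℝ) * fallR u 0 * fallR v (n+1-0)) := by
          rw [Finset.sum_add_distrib]; ring
      _ = (∑ j ∈ range (n+1), (n.choose j : ℝ) * fallR u (j+1) * fallR v (n-j))
          + ∑ j ∈ range (n+1+1), (n.choose j : ℝ) * fallR u j * fallR v (n+1-j) := by
          rw [Finset.sum_range_succ' (fun j => (n.choose j : ℝ) * fallR u j * fallR v (n+1-j)) (n+1)]
      _ = (∑ j ∈ range (n+1), (n.choose j : ℝ) * fallR u (j+1) * fallR v (n-j))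
          + ∑ j ∈ range (n+1), (n.choose j : ℝ) * fallR u j * fallR v (n+1-j) := by
          rw [Finset.sum_range_succ (fun j => (n.choose j : ℝ) * fallR u j * fallR v (n+1-j)) (n+1)]
          simp
      _ = ∑ j ∈ range (n+1), (n.choose j : ℝ) * fallR u j * fallR v (n-j) * ((u+v) - n) := by
          rw [← Finset.sum_add_distrib]
          refine Finset.sum_congr rfl fun j hj => ?_
          have hj' : j ≤ n := by simpa [Nat.lt_succ_iff] using hj
          rw [Nat.succ_sub hj', fallR, fallR, Nat.cast_sub hj']
          ring
      _ = fallR (u+v) n * ((u+v) - n) := by rw [← Finset.sum_mul, ih]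
      _ = fallR (u+v) (n+1) := by rw [fallR]

/-! ### gammaMu lemmas -/

lemma gammaMu_pos (μ : ℝ) (hμ : -(1/2 : ℝ) < μ) (n : ℕ) : 0 < gammaMu μ n := by
  induction n with
  | zero => simp [gammaMu]
  | succ n ih =>
    rw [gammaMu]
    refine mul_pos ?_ ih
    have hn : (0:ℝ) ≤ n := Nat.cast_nonneg n
    split <;> nlinarith

lemma gammaMu_even (μ : ℝ) (m : ℕ) :
    gammaMu μ (2*m) = 4^m * m.factorial * ascR (μ + 1/2) m := by
  induction m with
  | zero => simp [gammaMu, ascR]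
  | succ m ih =>
    have ho : ¬ Odd (2*m+1+1) := by simp [Nat.odd_iff]; omega
    have he : Odd (2*m+1) := by simp [Nat.odd_iff]
    rw [show 2*(m+1) = (2*m+1)+1 from by ring]
    rw [gammaMu, gammaMu, if_neg ho, if_pos he, ih, ascR]
    push_cast [Nat.factorial_succ, pow_succ]
    ring

lemma gammaMu_odd (μ : ℝ) (m : ℕ) :
    gammaMu μ (2*m+1) = 2 * 4^m * m.factorial * ascR (μ + 1/2) (m+1) := by
  have he : Odd (2*m+1) := by simp [Nat.odd_iff]
  rw [gammaMu, if_pos he, gammaMu_even, ascR]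
  push_cast
  ring

lemma binomMu_coe (μ : ℝ) (m k : ℕ) (h : k ≤ m) :
    binomMu μ m (k : ℤ) = gammaMu μ m / (gammaMu μ (m - k) * gammaMu μ k) := by
  simp only [binomMu, Int.toNat_natCast]
  rw [if_pos ⟨Int.natCast_nonneg k, by exact_mod_cast h⟩]

lemma binomMu_zero' (μ : ℝ) (m k : ℕ) (h : m < k) : binomMu μ m (k : ℤ) = 0 := by
  simp only [binomMu]
  rw [if_neg]
  rintro ⟨-, h2⟩
  exact absurd (by exact_mod_cast h2) (not_le.mpr h)

lemma sum_range_split (f : ℕ → ℝ) (n : ℕ) :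
    ∑ k ∈ range (2*n+1), f k
      = ∑ j ∈ range (n+1), f (2*j) + ∑ j ∈ range n, f (2*j+1) := by
  induction n with
  | zero => simp
  | succ n ih =>
    rw [show 2*(n+1)+1 = (2*n+1)+1+1 from by ring, sum_range_succ, sum_range_succ, ih,
      sum_range_succ (fun j => f (2*j)) (n+1), sum_range_succ (fun j => f (2*j+1)) n,
      show 2*n+1+1 = 2*(n+1) from by ring]
    ring

lemma binom_even_term (μ : ℝ) (hμ : -(1/2:ℝ) < μ) (n j : ℕ) (hj : j ≤ n) :
    binomMu μ (2*n) ((2*j : ℕ) : ℤ)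
      = (n.choose j : ℝ) * ascR (μ+1/2) n / (ascR (μ+1/2) j * ascR (μ+1/2) (n-j)) := by
  have ha : (0:ℝ) < μ + 1/2 := by linarith
  rw [binomMu_coe _ _ _ (by omega)]
  rw [div_eq_div_iff
    (mul_pos (gammaMu_pos μ hμ _) (gammaMu_pos μ hμ _)).ne'
    (mul_pos (ascR_pos ha j) (ascR_pos ha (n-j))).ne']
  rw [show 2*n - 2*j = 2*(n-j) from by omega, gammaMu_even, gammaMu_even, gammaMu_even]
  have h4 : (4:ℝ)^n = 4^(n-j) * 4^j := by rw [← pow_add]; congr 1; omega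
  have hfac : ((n.factorial : ℕ) : ℝ)
      = (n.choose j : ℝ) * (j.factorial : ℝ) * ((n-j).factorial : ℝ) := by
    exact_mod_cast (Nat.choose_mul_factorial_mul_factorial hj).symm
  rw [h4, hfac]
  ring

lemma binom_odd_term (μ : ℝ) (hμ : -(1/2:ℝ) < μ) (n j : ℕ) (hj : j ≤ n) :
    binomMu μ (2*n) ((2*j+1 : ℕ) : ℤ)
      = (n.choose j : ℝ) * ((n:ℝ) - j) * ascR (μ+1/2) n
        / (ascR (μ+1/2) (j+1) * ascR (μ+1/2) (n-j)) := by
  have ha : (0:ℝ) < μ + 1/2 := by linarith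
  rcases eq_or_lt_of_le hj with rfl | hjn
  · rw [binomMu_zero' _ _ _ (by omega)]
    simp
  · rw [binomMu_coe _ _ _ (by omega)]
    rw [div_eq_div_iff
      (mul_pos (gammaMu_pos μ hμ _) (gammaMu_pos μ hμ _)).ne'
      (mul_pos (ascR_pos ha (j+1)) (ascR_pos ha (n-j))).ne']
    rw [show 2*n - (2*j+1) = 2*(n-j-1)+1 from by omega,
      gammaMu_even, gammaMu_odd, gammaMu_odd, show n-j-1+1 = n-j from by omega]
    have h4 : (4:ℝ)^n = 4^(n-j-1) * 4^j * 4 := by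
      rw [← pow_add, ← pow_succ]; congr 1; omega
    have hfN : n.factorial = n.choose j * j.factorial * ((n-j) * (n-j-1).factorial) := by
      have h1 : (n-j).factorial = (n-j) * (n-j-1).factorial := by
        rw [show n-j = (n-j-1)+1 from by omega, Nat.factorial_succ]
        simp
      rw [← Nat.choose_mul_factorial_mul_factorial hj, h1]
    have hnj : (((n-j) : ℕ) : ℝ) = (n:ℝ) - j := by
      push_cast [Nat.cast_sub hj]; ring
    have hfac : ((n.factorial : ℕ) : ℝ)
        = (n.choose j : ℝ) * (j.factorial : ℝ) * (((n:ℝ) - j) * ((n-j-1).factorial : ℝ)) := by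
      rw [← hnj]
      exact_mod_cast hfN
    rw [h4, hfac]
    ring

lemma key_alg (a : ℝ) (ha : 0 < a) (n j : ℕ) (hj : j ≤ n) (c : ℝ) :
    c * ascR a n / (ascR a j * ascR a (n-j))
      + c * ((n:ℝ) - j) * ascR a n / (ascR a (j+1) * ascR a (n-j))
      = c * fallR (a + n - 1) j * fallR (a + n) (n-j) / ascR a n := by
  have id1 : fallR (a + n) (n-j) = ascR a (n+1) / ascR a (j+1) := by
    have h := ascR_mul_fallR a (j+1) (n-j)
    rw [show (j+1) + (n-j) = n+1 from by omega] at h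
    have he : a + ↑(j+1) + ↑(n-j) - 1 = a + n := by
      push_cast [Nat.cast_sub hj]; ring
    rw [he] at h
    rw [eq_div_iff (ascR_pos ha (j+1)).ne', mul_comm]
    exact h
  have id2 : fallR (a + n - 1) j = ascR a n / ascR a (n-j) := by
    have h := ascR_mul_fallR a (n-j) j
    rw [show (n-j) + j = n from by omega] at h
    have he : a + ↑(n-j) + ↑j - 1 = a + n - 1 := by
      push_cast [Nat.cast_sub hj]; ring
    rw [he] at h
    rw [eq_div_iff (ascR_pos ha (n-j)).ne', mul_comm]
    exact h
  rw [id1, id2, show ascR a (n+1) = ascR a n * (a + n) from by rw [ascR],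
    show ascR a (j+1) = ascR a j * (a + j) from by rw [ascR]]
  have h1 := (ascR_pos ha j).ne'
  have h2 := (ascR_pos ha (n-j)).ne'
  have h3 := (ascR_pos ha n).ne'
  have h4 : a + (j:ℝ) ≠ 0 := by positivity
  field_simp
  ring

theorem pMu_sum_eval (μ : ℝ) (hμ : -(1/2 : ℝ) < μ) (n : ℕ) :
    pMu μ (2 * n) 1 1 =
      ((2 ^ (2 * n) * ∏ k ∈ Finset.range n, (((k : ℝ) + 1) + μ) / (((k : ℝ) + 1) + 2 * μ) : ℝ) : ℂ) := by
  have ha : (0:ℝ) < μ + 1/2 := by linarith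
  have main : ∑ k ∈ range (2*n+1), binomMu μ (2*n) (k : ℤ)
      = (2:ℝ) ^ (2*n) * ∏ k ∈ Finset.range n, (((k : ℝ) + 1) + μ) / (((k : ℝ) + 1) + 2 * μ) := by
    rw [sum_range_split (fun k => binomMu μ (2*n) (k : ℤ)) n]
    have hext : ∑ j ∈ range n, binomMu μ (2*n) ((2*j+1 : ℕ) : ℤ)
        = ∑ j ∈ range (n+1), binomMu μ (2*n) ((2*j+1 : ℕ) : ℤ) := by
      rw [sum_range_succ, binomMu_zero' _ _ _ (by omega), add_zero]
    rw [hext, ← Finset.sum_add_distrib]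
    have key : ∀ j ∈ range (n+1),
        binomMu μ (2*n) ((2*j : ℕ) : ℤ) + binomMu μ (2*n) ((2*j+1 : ℕ) : ℤ)
        = (n.choose j : ℝ) * fallR ((μ+1/2) + n - 1) j * fallR ((μ+1/2) + n) (n-j)
            / ascR (μ+1/2) n := by
      intro j hj
      have hj' : j ≤ n := by simpa [Nat.lt_succ_iff] using hj
      rw [binom_even_term μ hμ n j hj', binom_odd_term μ hμ n j hj']
      exact key_alg (μ+1/2) ha n j hj' _
    rw [Finset.sum_congr rfl key, ← Finset.sum_div,
      fall_vandermonde ((μ+1/2) + n - 1) ((μ+1/2) + n) n]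
    have hfa : fallR ((μ+1/2) + ↑n - 1 + ((μ+1/2) + ↑n)) n = ascR (2*μ+1 + n) n := by
      rw [fallR_eq_ascR]
      congr 1
      ring
    rw [hfa]
    have hdup : ascR (2*μ+1) (2*n) = 4^n * ascR (μ+1/2) n * ascR (μ+1) n := by
      have h := ascR_dup (μ+1/2) n
      rw [show 2*(μ+1/2) = 2*μ+1 from by ring, show (μ+1/2)+1/2 = μ+1 from by ring] at h
      exact h
    have hadd : ascR (2*μ+1) (2*n) = ascR (2*μ+1) n * ascR (2*μ+1 + n) n := by
      rw [show 2*n = n + n from by ring, ascR_add]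
    have h2a : (0:ℝ) < 2*μ+1 := by linarith
    have hprod : ∏ k ∈ Finset.range n, (((k : ℝ) + 1) + μ) / (((k : ℝ) + 1) + 2 * μ)
        = ascR (μ+1) n / ascR (2*μ+1) n := by
      rw [Finset.prod_div_distrib, ascR_eq_prod, ascR_eq_prod]
      congr 1
      · exact Finset.prod_congr rfl fun k _ => by ring
      · exact Finset.prod_congr rfl fun k _ => by ring
    rw [hprod, show (2:ℝ)^(2*n) = 4^n from by rw [pow_mul]; norm_num,
      mul_div_assoc' ((4:ℝ)^n) _ _,
      div_eq_div_iff (ascR_pos ha n).ne' (ascR_pos h2a n).ne']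
    linear_combination hdup - hadd
  calc pMu μ (2*n) 1 1
      = ((∑ k ∈ range (2*n+1), binomMu μ (2*n) (k : ℤ) : ℝ) : ℂ) := by
        rw [pMu]
        push_cast
        simp
    _ = _ := by rw [main]
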